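/- arXiv:2107.05259 — 2 statements merged into one kernel-verified Lean document; each statement's English description precedes it below -/
import Mathlib

section
/- Every magic labelling of the cube with nonnegative integer labels can be written uniquely in exactly one of the eight forms: (t1) k1α1+k2α2+k3α3+k4α4+k5α5+k6α6; (t2) α7+k1α1+k2α2+k3α3+k4α5+k5α6+k6α7; (t31) α9+k1α2+k2α3+k3α4+k4α6+k5α7+k6α9; (t32) (α1+α9)+k1α1+k2α3+k3α4+k4α6+k5α7+k6α9; (t33) (α6+α8)+k1α1+k2α2+k3α4+k4α6+k5α7+k6α8; (t34) α8+k1α1+k2α2+k3α3+k4α4+k5α7+k6α8; (t351) (α4+α7)+k1α1+k2α2+k3α3+k4α4+k5α6+k6α7; (t352) T+k1α1+k2α2+k3α3+k4α4+k5α6+k6α7, where all k_i ∈ N. -/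
def IsMagic (x : Fin 12 → ℕ) (r : ℕ) : Prop :=
  x 0 + x 1 + x 8 = r ∧ x 0 + x 2 + x 9 = r ∧
  x 1 + x 3 + x 11 = r ∧ x 2 + x 3 + x 10 = r ∧
  x 4 + x 5 + x 8 = r ∧ x 4 + x 6 + x 9 = r ∧
  x 5 + x 7 + x 11 = r ∧ x 6 + x 7 + x 10 = r

def a1 : Fin 12 → ℕ := ![0,1,1,0,1,0,0,1,0,0,0,0]
def a2 : Fin 12 → ℕ := ![1,0,0,1,0,1,1,0,0,0,0,0]
def a3 : Fin 12 → ℕ := ![1,0,0,0,1,0,0,0,0,0,1,1]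
def a4 : Fin 12 → ℕ := ![0,1,0,0,0,1,0,0,0,1,1,0]
def a5 : Fin 12 → ℕ := ![1,0,0,1,1,0,0,1,0,0,0,0]
def a6 : Fin 12 → ℕ := ![0,0,0,1,0,0,0,1,1,1,0,0]
def a7 : Fin 12 → ℕ := ![0,0,1,0,0,0,1,0,1,0,0,1]
def a8 : Fin 12 → ℕ := ![0,1,1,0,0,1,1,0,0,0,0,0]
def a9 : Fin 12 → ℕ := ![0,0,0,0,0,0,0,0,1,1,1,1]
def T : Fin 12 → ℕ := fun _ => 1

/-- The shift vector of each of the eight types t1, t2, t31, t32, t33, t34, t351, t352. -/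
def base : Fin 8 → (Fin 12 → ℕ) :=
  ![0, a7, a9, a1 + a9, a6 + a8, a8, a4 + a7, T]

/-- The six generators of each of the eight types. -/
def gens : Fin 8 → Fin 6 → (Fin 12 → ℕ) :=
  ![![a1, a2, a3, a4, a5, a6],
    ![a1, a2, a3, a5, a6, a7],
    ![a2, a3, a4, a6, a7, a9],
    ![a1, a3, a4, a6, a7, a9],
    ![a1, a2, a4, a6, a7, a8],
    ![a1, a2, a3, a4, a7, a8],
    ![a1, a2, a3, a4, a6, a7],
    ![a1, a2, a3, a4, a6, a7]]

/-- The labelling of type `t` with coefficients `k`. -/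
def rep (t : Fin 8) (k : Fin 6 → ℕ) : Fin 12 → ℕ :=
  base t + ∑ i, k i • gens t i

/-!
The magic labellings form the lattice points of a six-dimensional cone, spanned by the nine
perfect matchings `a1`, …, `a9` of the cube. The eight types are the lattice points of the cells
of a half-open decomposition of that cone into simplicial cones: six unimodular ones, whose cells
are cut out by two strict or weak linear inequalities, and the cone on `a1 a2 a3 a4 a6 a7`, of
index two, whose lattice points fall into the two cosets of base `a4 + a7` and `T`, told apart by
the parity of `x 1 + x 4 + x 10`. On each cell the coefficients are read off by explicit linear
functionals, and the cells are pairwise disjoint.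
-/

lemma rep_eq (t : Fin 8) (k : Fin 6 → ℕ) :
    rep t k =
    ![![k 1 + k 2 + k 4, k 0 + k 3, k 0, k 1 + k 4 + k 5, k 0 + k 2 + k 4, k 1 + k 3,
        k 1, k 0 + k 4 + k 5, k 5, k 3 + k 5, k 2 + k 3, k 2],
      ![k 1 + k 2 + k 3, k 0, k 0 + k 5 + 1, k 1 + k 3 + k 4, k 0 + k 2 + k 3, k 1,
        k 1 + k 5 + 1, k 0 + k 3 + k 4, k 4 + k 5 + 1, k 4, k 2, k 2 + k 5 + 1],
      ![k 0 + k 1, k 2, k 4, k 0 + k 3, k 1, k 0 + k 2, k 0 + k 4, k 3,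
        k 3 + k 4 + k 5 + 1, k 2 + k 3 + k 5 + 1, k 1 + k 2 + k 5 + 1, k 1 + k 4 + k 5 + 1],
      ![k 1, k 0 + k 2 + 1, k 0 + k 4 + 1, k 3, k 0 + k 1 + 1, k 2, k 4, k 0 + k 3 + 1,
        k 3 + k 4 + k 5 + 1, k 2 + k 3 + k 5 + 1, k 1 + k 2 + k 5 + 1, k 1 + k 4 + k 5 + 1],
      ![k 1, k 0 + k 2 + k 5 + 1, k 0 + k 4 + k 5 + 1, k 1 + k 3 + 1, k 0, k 1 + k 2 + k 5 + 1,
        k 1 + k 4 + k 5 + 1, k 0 + k 3 + 1, k 3 + k 4 + 1, k 2 + k 3 + 1, k 2, k 4],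
      ![k 1 + k 2, k 0 + k 3 + k 5 + 1, k 0 + k 4 + k 5 + 1, k 1, k 0 + k 2, k 1 + k 3 + k 5 + 1,
        k 1 + k 4 + k 5 + 1, k 0, k 4, k 3, k 2 + k 3, k 2 + k 4],
      ![k 1 + k 2, k 0 + k 3 + 1, k 0 + k 5 + 1, k 1 + k 4, k 0 + k 2, k 1 + k 3 + 1,
        k 1 + k 5 + 1, k 0 + k 4, k 4 + k 5 + 1, k 3 + k 4 + 1, k 2 + k 3 + 1, k 2 + k 5 + 1],
      ![k 1 + k 2 + 1, k 0 + k 3 + 1, k 0 + k 5 + 1, k 1 + k 4 + 1, k 0 + k 2 + 1, k 1 + k 3 + 1,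
        k 1 + k 5 + 1, k 0 + k 4 + 1, k 4 + k 5 + 1, k 3 + k 4 + 1, k 2 + k 3 + 1, k 2 + k 5 + 1]]
      t := by
  fin_cases t <;>
    simp only [Fin.reduceFinMk, rep, base, gens, Fin.sum_univ_six, Matrix.cons_val] <;>
    ext j <;> fin_cases j <;>
    simp only [a1, a2, a3, a4, a5, a6, a7, a8, a9, T, Pi.add_apply, Pi.smul_apply, Pi.zero_apply,
      smul_eq_mul, Fin.reduceFinMk, Matrix.cons_val] <;> omega

def InIndexTwoCone (x : Fin 12 → ℕ) : Prop :=
  x 10 ≤ x 1 + x 4 ∧ x 10 ≤ x 0 + x 5 ∧ x 5 ≤ x 0 + x 10 ∧ x 0 < x 5 + x 10 ∧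
    x 1 ≤ x 7 + x 9 ∧ x 0 < x 6 + x 11

def InCell (x : Fin 12 → ℕ) : Fin 8 → Prop :=
  ![x 2 ≤ x 1 ∧ x 2 + x 11 ≤ x 4,
    x 1 < x 2 ∧ x 1 + x 10 ≤ x 4,
    x 4 ≤ x 0 ∧ x 1 + x 4 < x 10,
    x 0 < x 4 ∧ x 0 + x 5 < x 10,
    x 0 < x 3 ∧ x 4 + x 10 < x 1,
    x 3 ≤ x 0 ∧ x 7 + x 9 < x 1,
    InIndexTwoCone x ∧ (x 1 + x 4 + x 10) % 2 = 0,
    InIndexTwoCone x ∧ (x 1 + x 4 + x 10) % 2 = 1]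

/-- Floor division lets one formula serve both cosets of the index-two cone: each numerator is
`2 * k i` on one coset and `2 * k i + 1` on the other. -/
def indexTwoCoeffs (x : Fin 12 → ℕ) : Fin 6 → ℕ :=
  ![(x 1 + x 4 - x 10) / 2, (x 0 + x 5 - x 10) / 2, (x 0 + x 10 - x 5) / 2,
    (x 5 + x 10 - x 0 - 1) / 2, (x 7 + x 9 - x 1) / 2, (x 6 + x 11 - x 0 - 1) / 2]

/-- Only meaningful on `InCell x t`: elsewhere the truncated subtractions give junk. -/
def coeffs (x : Fin 12 → ℕ) : Fin 8 → Fin 6 → ℕ :=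
  ![![x 2, x 6, x 11, x 1 - x 2, x 4 - x 2 - x 11, x 8],
    ![x 1, x 5, x 10, x 4 - x 1 - x 10, x 9, x 2 - x 1 - 1],
    ![x 0 - x 4, x 4, x 1, x 7, x 2, x 10 - x 1 - x 4 - 1],
    ![x 4 - x 0 - 1, x 0, x 5, x 3, x 6, x 10 - x 0 - x 5 - 1],
    ![x 4, x 0, x 10, x 3 - x 0 - 1, x 11, x 1 - x 4 - x 10 - 1],
    ![x 7, x 3, x 0 - x 3, x 9, x 8, x 1 - x 7 - x 9 - 1],
    indexTwoCoeffs x,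
    indexTwoCoeffs x]

lemma inCell_rep (t : Fin 8) (k : Fin 6 → ℕ) : InCell (rep t k) t := by
  rw [rep_eq]
  fin_cases t <;> simp only [Fin.reduceFinMk, InCell, InIndexTwoCone, Matrix.cons_val] <;> omega

lemma eq_of_inCell_rep {t t' : Fin 8} {k : Fin 6 → ℕ} (h : InCell (rep t k) t') : t' = t := by
  rw [rep_eq] at h
  fin_cases t <;> fin_cases t' <;> first
    | rfl
    | (simp only [Fin.reduceFinMk, InCell, InIndexTwoCone, Matrix.cons_val] at h; omega)

lemma coeffs_rep (t : Fin 8) (k : Fin 6 → ℕ) : coeffs (rep t k) t = k := by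
  rw [rep_eq]
  ext i
  fin_cases t <;> fin_cases i <;>
    simp only [Fin.reduceFinMk, coeffs, indexTwoCoeffs, Matrix.cons_val] <;> omega

lemma IsMagic.inIndexTwoCone {x : Fin 12 → ℕ} {r : ℕ} (h : IsMagic x r)
    (hx : ∀ t : Fin 8, t < 6 → ¬InCell x t) : InIndexTwoCone x := by
  obtain ⟨h1, h2, h3, h4, h5, h6, h7, h8⟩ := h
  have c0 := hx 0 (by decide)
  have c1 := hx 1 (by decide)
  have c2 := hx 2 (by decide)
  have c3 := hx 3 (by decide)
  have c4 := hx 4 (by decide)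
  have c5 := hx 5 (by decide)
  simp only [InCell, Matrix.cons_val] at c0 c1 c2 c3 c4 c5
  refine ⟨?_, ?_, ?_, ?_, ?_, ?_⟩ <;> omega

lemma IsMagic.exists_inCell {x : Fin 12 → ℕ} {r : ℕ} (h : IsMagic x r) :
    ∃ t, InCell x t := by
  by_contra! hx
  have hcone := h.inIndexTwoCone fun t _ => hx t
  rcases Nat.mod_two_eq_zero_or_one (x 1 + x 4 + x 10) with hp | hp
  · exact hx 6 ⟨hcone, hp⟩
  · exact hx 7 ⟨hcone, hp⟩

lemma IsMagic.rep_coeffs {x : Fin 12 → ℕ} {r : ℕ} (h : IsMagic x r) {t : Fin 8}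
    (hx : InCell x t) : rep t (coeffs x t) = x := by
  obtain ⟨h1, h2, h3, h4, h5, h6, h7, h8⟩ := h
  rw [rep_eq]
  fin_cases t <;>
    simp only [Fin.reduceFinMk, InCell, InIndexTwoCone, coeffs, indexTwoCoeffs,
      Matrix.cons_val] at hx ⊢ <;>
    ext j <;> fin_cases j <;> simp only [Fin.reduceFinMk, Matrix.cons_val] <;> omega

theorem eight_types (x : Fin 12 → ℕ) (r : ℕ) (h : IsMagic x r) :
    ∃! p : Fin 8 × (Fin 6 → ℕ), x = rep p.1 p.2 := by
  obtain ⟨t, ht⟩ := h.exists_inCell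
  refine ⟨(t, coeffs x t), (h.rep_coeffs ht).symm, ?_⟩
  rintro ⟨t', k'⟩ rfl
  obtain rfl := eq_of_inCell_rep ht
  rw [coeffs_rep]
end

section
/- The all-ones labelling T = (1,1,...,1) is a magic labelling of the cube with magic sum 3, and it cannot be written as k1α1+...+k6α6 with all k_i ∈ N (i.e., it is of type t352 with all k_i = 0). -/
/-!
The functional `x ↦ x 0 + x 9 - x 6 - x 8 - x 10` vanishes on every `aᵢ` except `a5`, where it is `1`.
So on a natural combination it returns the coefficient of `a5`, which is nonnegative, whereas on `T` it is `-1`.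
-/

def natCombo (k : Fin 6 → ℕ) : Fin 12 → ℕ :=
  k 0 • a1 + k 1 • a2 + k 2 • a3 + k 3 • a4 + k 4 • a5 + k 5 • a6

theorem natCombo_apply_zero_add_apply_nine (k : Fin 6 → ℕ) :
    natCombo k 0 + natCombo k 9 = natCombo k 6 + natCombo k 8 + natCombo k 10 + k 4 := by
  simp only [natCombo, Pi.add_apply, Pi.smul_apply, smul_eq_mul, a1, a2, a3, a4, a5, a6,
    Matrix.cons_val]
  ring

theorem T_isMagic : IsMagic T 3 :=
  ⟨rfl, rfl, rfl, rfl, rfl, rfl, rfl, rfl⟩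

theorem T_ne_natCombo (k : Fin 6 → ℕ) : T ≠ natCombo k := by
  intro hk
  have h := natCombo_apply_zero_add_apply_nine k
  simp only [← hk, T] at h
  omega

theorem T_magic_but_not_nat_combo :
    IsMagic T 3 ∧
    ¬ ∃ k : Fin 6 → ℕ,
        T = k 0 • a1 + k 1 • a2 + k 2 • a3 + k 3 • a4 + k 4 • a5 + k 5 • a6 :=
  ⟨T_isMagic, fun ⟨k, hk⟩ => T_ne_natCombo k hk⟩
end
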